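/- arXiv:0811.3595 — 2 statements merged into one kernel-verified Lean document; each statement's English description precedes it below -/
import Mathlib

section
/- (Collins) For every integer d ≥ n, the element Σ_{σ ∈ S_n} d^{cycles(σ)} σ (equivalently, the product ∏_{i=1}^n (d·1 + J_i)) is a unit in the group algebra A. -/
/-- The Jucys–Murphy element `J_{i+1}` (1-based: `J_1 = 0`,
`J_i = (1,i) + ⋯ + (i-1,i)`) in the complex group algebra of `S_n`. -/
noncomputable def jm (n : ℕ) (i : Fin n) : MonoidAlgebra ℂ (Equiv.Perm (Fin n)) :=
  ∑ k ∈ Finset.univ.filter (fun k => k < i),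
    MonoidAlgebra.of ℂ (Equiv.Perm (Fin n)) (Equiv.swap k i)

/-- The number of orbits of a permutation (cycles, counting fixed points). -/
def cycles {n : ℕ} (σ : Equiv.Perm (Fin n)) : ℕ :=
  σ.cycleType.card + (Finset.univ.filter fun x => σ x = x).card

/-!
Write `S_s = ∑_{supp σ ⊆ s} d^{cycles σ} σ`. For `a ∉ s`, a permutation `τ` with support in
`s ∪ {a}` and `τ a ≠ a` is uniquely `σ (k a)` with `supp σ ⊆ s` and `k ∈ s`, and it has one cycle
fewer than `σ`; hence `S_s (d + ∑_{k ∈ s} (k a)) = d S_{s ∪ {a}}`. For `s = {1, …, a-1}` the factor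
is `d + J_a`, which gives Jucys' factorisation `S_{[n]} = ∏ (d + J_i)`. Each factor is a unit since
it is diagonally dominant: its identity coefficient `d` exceeds `#s ≤ n - 1`, the sum of the
absolute values of the others. As `S_∅ = d^n`, induction on `s` makes every `S_s` a unit.
-/

open Equiv Finset MonoidAlgebra

namespace Equiv.Perm

variable {α : Type*} [Fintype α] [DecidableEq α] {f : Perm α} {x : α}

theorem IsCycle.card_cycleType_swap_mul_add_card_support (hf : f.IsCycle) (hx : f x ≠ x) :
    Multiset.card (swap x (f x) * f).cycleType + #f.support =
      #(swap x (f x) * f).support + 2 := by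
  by_cases hffx : f (f x) = x
  · rw [hf.eq_swap_of_apply_apply_eq_self hx hffx, swap_apply_left, swap_mul_self,
      card_support_swap hx.symm]
    simp
  · rw [(hf.swap_mul hx hffx).cycleType, support_swap_mul_eq f x hffx,
      card_sdiff_of_subset (by simpa using hx)]
    have : 1 ≤ #f.support := card_pos.2 ⟨x, mem_support.2 hx⟩
    rw [Multiset.card_singleton, card_singleton]
    omega

theorem card_cycleType_swap_mul_add_card_support (hx : f x ≠ x) :
    Multiset.card (swap x (f x) * f).cycleType + #f.support =
      Multiset.card f.cycleType + #(swap x (f x) * f).support + 1 := by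
  -- only the cycle `c` through `x` is affected; the rest `g` of `f` is disjoint from it
  set c := f.cycleOf x
  set g := f * c⁻¹
  have hc : c ∈ f.cycleFactorsFinset := cycleOf_mem_cycleFactorsFinset_iff.2 (mem_support.2 hx)
  have hc_cycle : c.IsCycle := isCycle_cycleOf f hx
  have hcx : c x = f x := cycleOf_apply_self f x
  have hgc : g.Disjoint c := disjoint_mul_inv_of_mem_cycleFactorsFinset hc
  have hgc' : g.Disjoint (swap x (c x) * c) :=
    hgc.mono subset_rfl fun y hy => (mem_support_swap_mul_imp_mem_support_ne hy).1
  have hf : f = g * c := (inv_mul_cancel_right f c).symm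
  have hswap : swap x (f x) * f = g * (swap x (c x) * c) := by
    have hxc : x ∈ c.support := mem_support.2 (hcx ▸ hx)
    have hswap_supp : (swap x (c x)).support ⊆ c.support := by
      rw [support_swap (hcx ▸ hx).symm]
      exact insert_subset hxc (singleton_subset_iff.2 (apply_mem_support.2 hxc))
    rw [← hcx, hf, ← mul_assoc, (hgc.mono subset_rfl hswap_supp).commute.symm.eq, mul_assoc]
  have hcyc := hc_cycle.card_cycleType_swap_mul_add_card_support (hcx ▸ hx)
  rw [hswap, hgc'.cycleType_mul, hgc'.card_support_mul, hf, hgc.cycleType_mul,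
    hgc.card_support_mul, Multiset.card_add, Multiset.card_add, card_cycleType_eq_one.2 hc_cycle]
  omega

theorem support_mul_swap_subset_insert {σ : Perm α} {s : Finset α} {a k : α}
    (hσ : σ.support ⊆ insert a s) (hk : k ∈ s) : (σ * swap k a).support ⊆ insert a s := by
  refine (support_mul_le σ _).trans (union_subset hσ ?_)
  by_cases hka : k = a
  · simp [hka]
  · rw [support_swap hka, pair_comm]
    exact insert_subset_insert a (singleton_subset_iff.2 hk)

theorem support_subset_insert_and_apply_eq_iff {σ : Perm α} {s : Finset α} {a : α} (ha : a ∉ s) :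
    σ.support ⊆ insert a s ∧ σ a = a ↔ σ.support ⊆ s :=
  ⟨fun ⟨h, hσa⟩ => (subset_insert_iff_of_notMem (notMem_support.2 hσa)).1 h,
    fun h => ⟨h.trans (subset_insert _ _), notMem_support.1 fun h' => ha (h h')⟩⟩

theorem sum_sum_mul_swap_eq_sum_apply_ne {M : Type*} [AddCommMonoid M] {s : Finset α} {a : α}
    (ha : a ∉ s) (F : Perm α → M) :
    ∑ σ with σ.support ⊆ s, ∑ k ∈ s, F (σ * swap k a) =
      ∑ τ with τ.support ⊆ insert a s ∧ ¬τ a = a, F τ := by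
  rw [← sum_product']
  refine sum_nbij' (fun p => p.1 * swap p.2 a) (fun τ => (τ * swap (τ⁻¹ a) a, τ⁻¹ a))
    ?_ ?_ ?_ ?_ fun _ _ => rfl
  · rintro ⟨σ, k⟩ hp
    simp only [mem_product, mem_filter, mem_univ, true_and] at hp ⊢
    obtain ⟨hσ, hk⟩ := hp
    have hσa : σ a = a := ((support_subset_insert_and_apply_eq_iff ha).2 hσ).2
    refine ⟨support_mul_swap_subset_insert (hσ.trans (subset_insert _ _)) hk, ?_⟩
    rw [mul_apply, swap_apply_right]
    exact fun h => ha (σ.injective (h.trans hσa.symm) ▸ hk)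
  · intro τ hτ
    simp only [mem_product, mem_filter, mem_univ, true_and] at hτ ⊢
    obtain ⟨hτs, hτa⟩ := hτ
    have hτk : τ (τ⁻¹ a) = a := τ.apply_symm_apply a
    have hka : τ⁻¹ a ≠ a := fun h => hτa (by rwa [h] at hτk)
    have hk : τ⁻¹ a ∈ s :=
      (mem_insert.1 (hτs (mem_support.2 (hτk.trans_ne hka.symm)))).resolve_left hka
    refine ⟨(support_subset_insert_and_apply_eq_iff ha).1
      ⟨support_mul_swap_subset_insert hτs hk, by simp⟩, hk⟩
  · rintro ⟨σ, k⟩ hp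
    simp only [mem_product, mem_filter, mem_univ, true_and] at hp
    have hk : (σ * swap k a)⁻¹ a = k :=
      inv_eq_iff_eq.2 (by simp [((support_subset_insert_and_apply_eq_iff ha).2 hp.1).2])
    simp only [hk, mul_assoc, swap_mul_self, mul_one]
  · intro τ _
    simp [mul_assoc]

end Equiv.Perm

theorem MonoidAlgebra.isUnit_single_one_add_sum {𝕜 G ι : Type*} [NormedField 𝕜] [Group G]
    [Finite G] (c : 𝕜) (s : Finset ι) (g : ι → G) (b : ι → 𝕜) (h : ∑ i ∈ s, ‖b i‖ < ‖c‖) :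
    IsUnit (single 1 c + ∑ i ∈ s, single (g i) (b i)) := by
  have : IsArtinianRing (MonoidAlgebra 𝕜 G) := .of_finite 𝕜 _
  rw [IsArtinianRing.isUnit_iff_isRightRegular, isRightRegular_iff_left_eq_zero_of_mul]
  intro v hv
  by_contra hv0
  obtain ⟨x₀, hmax⟩ := Finite.exists_max fun x => ‖v.coeff x‖
  have hpos : 0 < ‖v.coeff x₀‖ := by
    obtain ⟨y, hy⟩ : ∃ y, v.coeff y ≠ 0 := by
      by_contra! hzero
      exact hv0 (MonoidAlgebra.ext (Finsupp.ext hzero))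
    exact (norm_pos_iff.2 hy).trans_le (hmax y)
  have hcoeff : v.coeff x₀ * c = -∑ i ∈ s, v.coeff (x₀ * (g i)⁻¹) * b i := by
    have := congrArg (fun w => w.coeff x₀) hv
    simp only [mul_add, mul_sum, coeff_add, coeff_sum, Finsupp.add_apply, Finsupp.finsetSum_apply,
      coeff_mul_single_apply, inv_one, mul_one] at this
    exact eq_neg_of_add_eq_zero_left this
  have : ‖v.coeff x₀‖ * ‖c‖ ≤ ‖v.coeff x₀‖ * ∑ i ∈ s, ‖b i‖ :=
    calc ‖v.coeff x₀‖ * ‖c‖ = ‖∑ i ∈ s, v.coeff (x₀ * (g i)⁻¹) * b i‖ := by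
          rw [← norm_mul, hcoeff, norm_neg]
      _ ≤ ∑ i ∈ s, ‖v.coeff x₀‖ * ‖b i‖ :=
          (norm_sum_le _ _).trans (sum_le_sum fun i _ => by
            rw [norm_mul]; gcongr; exact hmax _)
      _ = ‖v.coeff x₀‖ * ∑ i ∈ s, ‖b i‖ := (mul_sum _ _ _).symm
  exact (le_of_mul_le_mul_left this hpos).not_gt h

section Cycles

variable {n : ℕ}

theorem cycles_one : cycles (1 : Perm (Fin n)) = n := by
  simp [cycles]

theorem cycles_add_card_support (σ : Perm (Fin n)) :
    cycles σ + #σ.support = Multiset.card σ.cycleType + n := by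
  rw [cycles, add_assoc, Perm.support, card_filter_add_card_filter_not, card_univ,
    Fintype.card_fin]

theorem cycles_swap_mul {σ : Perm (Fin n)} {x : Fin n} (hx : σ x ≠ x) :
    cycles (swap x (σ x) * σ) = cycles σ + 1 := by
  have := Perm.card_cycleType_swap_mul_add_card_support hx
  have := cycles_add_card_support σ
  have := cycles_add_card_support (swap x (σ x) * σ)
  omega

theorem cycles_mul_swap {σ : Perm (Fin n)} {a k : Fin n} (ha : σ a = a) (hk : k ≠ a) :
    cycles (σ * swap k a) + 1 = cycles σ := by
  have hτa : (σ * swap k a) a = σ k := by simp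
  have hσk : σ k ≠ a := fun h => hk (σ.injective (h.trans ha.symm))
  have hσ : swap a (σ k) * (σ * swap k a) = σ := by
    rw [mul_swap_eq_swap_mul, ha, swap_comm, swap_mul_self_mul]
  rw [← cycles_swap_mul (hτa ▸ hσk), hτa, hσ]

end Cycles

section CycleWeightSum

variable {n : ℕ} {R : Type*} [CommSemiring R]

noncomputable def cycleWeightSum (d : R) (s : Finset (Fin n)) :
    MonoidAlgebra R (Perm (Fin n)) :=
  ∑ σ with σ.support ⊆ s, single σ (d ^ cycles σ)

theorem cycleWeightSum_empty (d : R) :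
    cycleWeightSum d (∅ : Finset (Fin n)) = single 1 (d ^ n) := by
  simp [cycleWeightSum, filter_eq', cycles_one]

theorem cycleWeightSum_mul_single_one_add_sum_swap (d : R) {s : Finset (Fin n)} {a : Fin n}
    (ha : a ∉ s) :
    cycleWeightSum d s * (single 1 d + ∑ k ∈ s, single (swap k a) 1) =
      d • cycleWeightSum d (insert a s) := by
  rw [cycleWeightSum, cycleWeightSum, smul_sum, mul_add, sum_mul, sum_mul,
    ← sum_filter_add_sum_filter_not {τ : Perm (Fin n) | τ.support ⊆ insert a s} (· a = a),
    filter_filter, filter_filter, ← Perm.sum_sum_mul_swap_eq_sum_apply_ne ha]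
  congr 1
  · refine sum_congr (filter_congr fun τ _ => (Perm.support_subset_insert_and_apply_eq_iff ha).symm)
      fun σ _ => ?_
    rw [single_mul_single, mul_one, smul_single', mul_comm]
  · refine sum_congr rfl fun σ hσ => ?_
    rw [mul_sum]
    refine sum_congr rfl fun k hk => ?_
    have hσa : σ a = a := ((Perm.support_subset_insert_and_apply_eq_iff ha).2 (mem_filter.1 hσ).2).2
    rw [single_mul_single, mul_one, smul_single', ← pow_succ',
      cycles_mul_swap hσa (ne_of_mem_of_not_mem hk ha)]

theorem isUnit_cycleWeightSum {𝕜 : Type*} [NormedField 𝕜] {d : 𝕜} (hd : (n : ℝ) - 1 < ‖d‖)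
    (s : Finset (Fin n)) : IsUnit (cycleWeightSum d s) := by
  induction s using Finset.induction_on with
  | empty =>
    have hdn : d ^ n ≠ 0 := by
      rcases eq_or_ne d 0 with rfl | hd0
      · have : n = 0 := by simp at hd; omega
        simp [this]
      · exact pow_ne_zero n hd0
    rw [cycleWeightSum_empty]
    exact (isUnit_iff_ne_zero.2 hdn).map singleOneRingHom
  | insert a s ha ih =>
    have hs : (#s : ℝ) < ‖d‖ := by
      have : #s + 1 ≤ n := by simpa using card_lt_univ_of_notMem ha
      have : (#s : ℝ) + 1 ≤ n := by exact_mod_cast this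
      linarith
    have hd0 : d ≠ 0 := norm_pos_iff.1 ((Nat.cast_nonneg _).trans_lt hs)
    have hF := isUnit_single_one_add_sum d s (swap · a) (fun _ => (1 : 𝕜)) (by simpa using hs)
    rw [← isUnit_smul_iff (Units.mk0 d hd0)]
    exact cycleWeightSum_mul_single_one_add_sum_swap d ha ▸ ih.mul hF

end CycleWeightSum

theorem isUnit_sum_d_pow_cycles_general (n : ℕ) (d : ℕ) (hd : n ≤ d) :
    IsUnit (∑ σ : Equiv.Perm (Fin n), MonoidAlgebra.single σ ((d : ℂ) ^ cycles σ)) := by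
  have hnd : (n : ℝ) - 1 < ‖(d : ℂ)‖ := by
    rw [Complex.norm_natCast]
    linarith [(Nat.cast_le (α := ℝ)).2 hd]
  simpa [cycleWeightSum] using isUnit_cycleWeightSum hnd univ

/-- Collins' theorem: for every integer `d ≥ n`, the element
`Σ_σ d^{cycles(σ)} σ = ∏_{i=1}^n (d·1 + J_i)` is a unit in the group algebra. -/
theorem isUnit_sum_d_pow_cycles (n : ℕ) (hn : 1 ≤ n) (d : ℕ) (hd : n ≤ d) :
    IsUnit (∑ σ : Equiv.Perm (Fin n), MonoidAlgebra.single σ ((d : ℂ) ^ cycles σ)) :=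
  isUnit_sum_d_pow_cycles_general n d hd
end

section
/- (Okounkov–Vershik) The Gelfand–Zetlin algebra equals the algebra generated by the Jucys–Murphy elements: the subalgebra of A generated by Z_1 ∪ Z_2 ∪ … ∪ Z_n equals the subalgebra of A generated by {J_1, …, J_n}. -/
/-- The canonical copy of `ℂ[S_i]` inside `ℂ[S_n]`: the linear span of the
permutations fixing every point of `{i+1,…,n}` (1-based; in the 0-based indexing of
`Fin n`, the points `k` with `i ≤ k`). Since this set of permutations is a subgroup,
this span is a subalgebra. -/
noncomputable def groupAlgCopy (n i : ℕ) :
    Submodule ℂ (MonoidAlgebra ℂ (Equiv.Perm (Fin n))) :=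
  Submodule.span ℂ
    { x | ∃ σ : Equiv.Perm (Fin n), (∀ k : Fin n, i ≤ (k : ℕ) → σ k = k) ∧
        x = MonoidAlgebra.of ℂ (Equiv.Perm (Fin n)) σ }

/-- The center `Z_i` of the canonical copy of `ℂ[S_i]` inside `ℂ[S_n]`: the set of
elements of that copy commuting with every element of the copy. -/
noncomputable def centerCopy (n i : ℕ) : Set (MonoidAlgebra ℂ (Equiv.Perm (Fin n))) :=
  { x | x ∈ groupAlgCopy n i ∧ ∀ y ∈ groupAlgCopy n i, x * y = y * x }

/-!
Each `J_k` is a difference `P_{k+1} - P_k` of the class sums `P_i = J_1 + ⋯ + J_i` of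
transpositions of `S_i`, so it lies in the Gelfand–Zetlin algebra.

Conversely, the power sums `p_e(J_1, …, J_i)` are central in `ℂ[S_i]`: the elements `J_a`,
`J_{a+1}` commute and satisfy `s_a J_a s_a = J_{a+1} - s_a`, which makes `s_a` commute with
`J_a^e + J_{a+1}^e`, while `s_a` commutes with the other `J_m`. For `ρ ∈ S_i` with cycle lengths
`ℓ₁, …, ℓ_r`, the product `∏ p_{ℓ_j - 1}(J_1, …, J_i)` has nonnegative coefficients, a positive
one at `ρ`, and is supported on permutations moving at most as many points as `ρ`; those moving
exactly as many have the cycle type of `ρ`. Indeed every term of `J_k^m` is a product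
`(a₁ k)⋯(a_m k)`, which moves at most `m + 1` points and is an `(m + 1)`-cycle when it moves that
many. Subtracting multiples of these products from a central element of `ℂ[S_i]`, by induction on
the number of moved points, writes it as a polynomial in the `J_k`.
-/

open Equiv Finset
open scoped Pointwise

namespace MonoidAlgebra

variable {k G : Type*}

section Semiring

variable [Semiring k]

theorem mul_mem_supported [Mul G] {s t : Set G} {x y : MonoidAlgebra k G}
    (hx : x ∈ supported k k s) (hy : y ∈ supported k k t) : x * y ∈ supported k k (s * t) := by
  classical
  rw [mem_supported] at hx hy ⊢
  refine (Finset.coe_subset.2 (support_coeff_mul_subset x y)).trans ?_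
  rw [Finset.coe_mul]
  exact Set.mul_subset_mul hx hy

variable [Monoid G]

theorem of_mem_supported {s : Set G} {g : G} (hg : g ∈ s) : of k G g ∈ supported k k s :=
  mem_supported.2 <| by
    rw [of_apply, coeff_single]
    exact (Finset.coe_subset.2 Finsupp.support_single_subset).trans (by simpa using hg)

theorem one_mem_supported {s : Set G} (hs : 1 ∈ s) : (1 : MonoidAlgebra k G) ∈ supported k k s :=
  of_mem_supported (k := k) hs

end Semiring

section CommSemiring

variable [CommSemiring k] [Monoid G]

theorem commute_of_mem_supported {s : Set G} {y z : MonoidAlgebra k G}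
    (h : ∀ g ∈ s, Commute (of k G g) z) (hy : y ∈ supported k k s) : Commute y z := by
  rw [supported_eq_span_single] at hy
  induction hy using Submodule.span_induction with
  | mem x hx =>
    obtain ⟨g, hg, rfl⟩ := hx
    exact h g hg
  | zero => exact Commute.zero_left z
  | add a b _ _ ha hb => exact ha.add_left hb
  | smul c a _ ha => exact ha.smul_left c

variable (k) in
noncomputable def supportedSubalgebra (M : Submonoid G) : Subalgebra k (MonoidAlgebra k G) :=
  (supported k k (M : Set G)).toSubalgebra (one_mem_supported M.one_mem)
    fun _ _ hx hy => supported_mono (Set.mul_subset_iff.2 fun _ ha _ hb => M.mul_mem ha hb)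
      (mul_mem_supported hx hy)

theorem of_mem_supportedSubalgebra {M : Submonoid G} {g : G} (hg : g ∈ M) :
    of k G g ∈ supportedSubalgebra k M :=
  of_mem_supported hg

end CommSemiring

section Group

variable [Semiring k] [Group G]

theorem commute_of_mem_closure {S : Set G} {z : MonoidAlgebra k G}
    (h : ∀ g ∈ S, Commute (of k G g) z) {g : G} (hg : g ∈ Subgroup.closure S) :
    Commute (of k G g) z := by
  induction hg using Subgroup.closure_induction with
  | mem g hg => exact h g hg
  | one => simp
  | mul g g' _ _ hg hg' => simpa using hg.mul_left hg'
  | inv g _ hg =>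
    have h₁ : of k G g * of k G g⁻¹ = 1 := by rw [← map_mul, mul_inv_cancel, map_one]
    have h₂ : of k G g⁻¹ * of k G g = 1 := by rw [← map_mul, inv_mul_cancel, map_one]
    exact Commute.units_inv_left (u := ⟨_, _, h₁, h₂⟩) hg

theorem coeff_conj_of_commute {g : G} {x : MonoidAlgebra k G} (h : Commute (of k G g) x)
    (τ : G) : x.coeff (g * τ * g⁻¹) = x.coeff τ := by
  have := congrArg (fun y : MonoidAlgebra k G => y.coeff (g * τ)) h.eq
  simpa [of_apply, mul_assoc] using this.symm

end Group

section Order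

variable [Semiring k] [PartialOrder k] [Group G]

variable (k G) in
def nonnegCoeffs [IsOrderedRing k] : Subsemiring (MonoidAlgebra k G) where
  carrier := {x | ∀ g, 0 ≤ x.coeff g}
  zero_mem' g := by simp
  one_mem' g := by
    classical
    rw [one_def, coeff_single, Finsupp.single_apply]
    split_ifs <;> simp
  add_mem' hx hy g := by simpa using add_nonneg (hx g) (hy g)
  mul_mem' {x y} hx hy g := by
    rw [coeff_mul_apply_left]
    exact Finset.sum_nonneg fun h _ => mul_nonneg (hx h) (hy _)

theorem of_mem_nonnegCoeffs [IsOrderedRing k] (g : G) : of k G g ∈ nonnegCoeffs k G := fun h => by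
  classical
  rw [of_apply, coeff_single, Finsupp.single_apply]
  split_ifs <;> simp

variable [IsStrictOrderedRing k]

theorem coeff_of_self_pos (g : G) : 0 < (of k G g).coeff g := by
  simp [of_apply]

theorem coeff_add_pos {x y : MonoidAlgebra k G} (hy : y ∈ nonnegCoeffs k G) {a : G}
    (hx : 0 < x.coeff a) : 0 < (x + y).coeff a := by
  simpa using add_pos_of_pos_of_nonneg hx (hy a)

theorem coeff_mul_mul_pos {x y : MonoidAlgebra k G}
    (hx : x ∈ nonnegCoeffs k G) (hy : y ∈ nonnegCoeffs k G) {a b : G}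
    (ha : 0 < x.coeff a) (hb : 0 < y.coeff b) : 0 < (x * y).coeff (a * b) := by
  rw [coeff_mul_apply_left, Finsupp.sum]
  refine (mul_pos ha hb).trans_le ?_
  convert Finset.single_le_sum (f := fun h => x.coeff h * y.coeff (h⁻¹ * (a * b)))
    (fun h _ => mul_nonneg (hx h) (hy _)) (Finsupp.mem_support_iff.2 ha.ne') using 1
  simp

theorem coeff_prod_map_pos {ι : Type*} (f : ι → MonoidAlgebra k G) (g : ι → G) :
    ∀ L : List ι, (∀ j ∈ L, f j ∈ nonnegCoeffs k G ∧ 0 < (f j).coeff (g j)) →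
      0 < ((L.map f).prod).coeff ((L.map g).prod)
  | [], _ => by simp
  | j :: L, h => by
    simp only [List.map_cons, List.prod_cons]
    exact coeff_mul_mul_pos (h j (by simp)).1
      (Subsemiring.list_prod_mem _ fun x hx => by
        obtain ⟨j', hj', rfl⟩ := List.mem_map.1 hx
        exact (h j' (by simp [hj'])).1)
      (h j (by simp)).2 (coeff_prod_map_pos f g L fun j' hj' => h j' (by simp [hj']))

end Order

end MonoidAlgebra

theorem mul_pow_eq_pow_mul_add_sum {R : Type*} [Semiring R] {s x y c : R}
    (h : s * x = y * s + c) (p : ℕ) :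
    s * x ^ p = y ^ p * s + ∑ t ∈ range p, y ^ t * c * x ^ (p - 1 - t) := by
  induction p with
  | zero => simp
  | succ p ih =>
    have hshift : ∀ t ∈ range p, y ^ t * c * x ^ (p - 1 - t) * x = y ^ t * c * x ^ (p - t) :=
      fun t ht => by rw [mul_assoc, ← pow_succ, show p - 1 - t + 1 = p - t by
        have := mem_range.1 ht; omega]
    rw [pow_succ, ← mul_assoc, ih, add_mul, mul_assoc, h, sum_mul, sum_congr rfl hshift,
      sum_range_succ]
    simp only [mul_add, ← mul_assoc, ← pow_succ, Nat.add_sub_cancel, Nat.sub_self, pow_zero,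
      mul_one]
    abel

theorem commute_pow_add_pow_of_hecke {R : Type*} [Ring R] {s x y : R}
    (hx : s * x = y * s - 1) (hy : s * y = x * s + 1) (hxy : Commute x y) (p : ℕ) :
    Commute s (x ^ p + y ^ p) := by
  have hx' := mul_pow_eq_pow_mul_add_sum (s := s) (c := -1) (by rw [hx, sub_eq_add_neg]) p
  have hy' := mul_pow_eq_pow_mul_add_sum hy p
  simp only [mul_neg_one, mul_one, neg_mul, sum_neg_distrib] at hx' hy'
  rw [Commute, SemiconjBy, mul_add, hx', hy', hxy.geom_sum₂_comm, add_mul]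
  abel

namespace Equiv.Perm

section DecidableEq

variable {α : Type*} [DecidableEq α]

def starProds (k : α) (m : ℕ) : Set (Perm α) :=
  {σ | ∃ as : List α, as.length = m ∧ (as.map (swap · k)).prod = σ}

theorem starProds_one_mul_subset (k : α) (m : ℕ) :
    starProds k 1 * starProds k m ⊆ starProds k (m + 1) := by
  rintro _ ⟨_, ⟨as₁, h₁, rfl⟩, _, ⟨as, rfl, rfl⟩, rfl⟩
  obtain ⟨a, rfl⟩ := List.length_eq_one_iff.1 h₁
  exact ⟨a :: as, rfl, by simp⟩

theorem prod_map_swap_eq_formPerm {k : α} {as : List α} (h : (k :: as).Nodup) :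
    (as.map (swap · k)).prod = (k :: as.reverse).formPerm := by
  induction as with
  | nil => rfl
  | cons a as ih =>
    have hrot : (a :: k :: as.reverse).rotate 1 = k :: (a :: as).reverse := by simp
    have hnd : (a :: k :: as.reverse).Nodup := by
      simp only [List.nodup_cons, List.mem_cons, List.mem_reverse, List.nodup_reverse,
        not_or] at h ⊢
      exact ⟨⟨Ne.symm h.1.1, h.2.1⟩, h.1.2, h.2.2⟩
    rw [← hrot, List.formPerm_rotate_one _ hnd, List.formPerm_cons_cons,
      ← ih (h.sublist (by simp)), List.map_cons, List.prod_cons]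

def starWords : List ℕ → Set (Perm α)
  | [] => {1}
  | ℓ :: l => (⋃ k, starProds k (ℓ - 1)) * starWords l

variable [Fintype α]

theorem support_prod_map_swap_subset (k : α) (as : List α) :
    ((as.map (swap · k)).prod).support ⊆ (k :: as).toFinset := by
  intro x hx
  contrapose hx
  rw [notMem_support]
  induction as with
  | nil => rfl
  | cons a as ih =>
    simp only [List.toFinset_cons, mem_insert, List.mem_toFinset, not_or] at hx ih
    simp [ih ⟨hx.1, hx.2.2⟩, swap_apply_of_ne_of_ne hx.2.1 hx.1]

theorem card_support_le_of_mem_starProds {k : α} {m : ℕ} {σ : Perm α}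
    (hσ : σ ∈ starProds k m) : #σ.support ≤ m + 1 := by
  obtain ⟨as, rfl, rfl⟩ := hσ
  exact (card_le_card (support_prod_map_swap_subset k as)).trans (List.toFinset_card_le _)

theorem isCycle_of_mem_starProds {k : α} {m : ℕ} {σ : Perm α} (hm : 1 ≤ m)
    (hσ : σ ∈ starProds k m) (hcard : #σ.support = m + 1) : σ.IsCycle := by
  obtain ⟨as, rfl, rfl⟩ := hσ
  have hnd : (k :: as).Nodup := by
    rw [← Multiset.coe_nodup, ← Multiset.toFinset_card_eq_card_iff_nodup]
    refine le_antisymm (List.toFinset_card_le _) ?_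
    rw [Multiset.coe_card, List.length_cons, ← hcard]
    exact card_le_card (support_prod_map_swap_subset k as)
  rw [prod_map_swap_eq_formPerm hnd]
  exact List.isCycle_formPerm (by simpa using hnd) (by simp; omega)

theorem IsCycle.exists_prod_map_swap {c : Perm α} (hc : c.IsCycle) {k : α}
    (hk : k ∈ c.support) :
    ∃ as : List α, as.length + 1 = #c.support ∧ (∀ a ∈ as, a ∈ c.support ∧ a ≠ k) ∧
      (as.map (swap · k)).prod = c := by
  obtain ⟨b, L, hL⟩ := List.exists_cons_of_ne_nil (mt toList_eq_nil_iff.1 (not_not.2 hk))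
  obtain rfl : b = k := by simpa [hL] using toList_getElem_zero c k hk
  have hnd : (b :: L).Nodup := hL ▸ nodup_toList c b
  have hmem : ∀ a ∈ L, a ∈ toList c b := fun a ha => hL ▸ List.mem_cons_of_mem b ha
  refine ⟨L.reverse, ?_, fun a ha => ⟨?_, ?_⟩, ?_⟩
  · simpa [hL, hc.cycleOf_eq (mem_support.1 hk)] using length_toList c b
  · obtain ⟨hsame, -⟩ := mem_toList_iff.1 (hmem a (List.mem_reverse.1 ha))
    exact hsame.mem_support_iff.1 hk
  · rintro rfl
    exact (List.nodup_cons.1 hnd).1 (List.mem_reverse.1 ha)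
  · rw [prod_map_swap_eq_formPerm (by simpa using hnd), List.reverse_reverse, ← hL,
      formPerm_toList, hc.cycleOf_eq (mem_support.1 hk)]

theorem card_support_le_of_mem_starWords :
    ∀ {l : List ℕ} {τ : Perm α}, (∀ ℓ ∈ l, 1 ≤ ℓ) → τ ∈ starWords l → #τ.support ≤ l.sum
  | [], τ, _, hτ => by simp [starWords] at hτ; simp [hτ]
  | ℓ :: l, _, hl, hw => by
    obtain ⟨σ, hσ, τ, hτ, rfl⟩ := Set.mem_mul.1 hw
    obtain ⟨k, hσ⟩ := Set.mem_iUnion.1 hσ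
    have := card_support_le_of_mem_starProds hσ
    have := card_support_le_of_mem_starWords (fun m hm => hl m (by simp [hm])) hτ
    have := card_union_le σ.support τ.support
    have : #(σ * τ).support ≤ #(σ.support ∪ τ.support) := card_le_card (support_mul_le σ τ)
    have := hl ℓ (by simp)
    rw [List.sum_cons]
    omega

theorem cycleType_of_mem_starWords :
    ∀ {l : List ℕ} {τ : Perm α}, (∀ ℓ ∈ l, 2 ≤ ℓ) → τ ∈ starWords l →
      #τ.support = l.sum → τ.cycleType = l
  | [], τ, _, hτ, _ => by simp [starWords] at hτ; simp [hτ]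
  | ℓ :: l, _, hl, hw, hcard => by
    obtain ⟨σ, hσ, τ, hτ, rfl⟩ := Set.mem_mul.1 hw
    obtain ⟨k, hσ⟩ := Set.mem_iUnion.1 hσ
    have hl' : ∀ m ∈ l, 2 ≤ m := fun m hm => hl m (by simp [hm])
    have hℓ := hl ℓ (by simp)
    have hσle := card_support_le_of_mem_starProds hσ
    have hτle := card_support_le_of_mem_starWords (fun m hm => (hl' m hm).trans' one_le_two) hτ
    have := card_union_le σ.support τ.support
    have : #(σ * τ).support ≤ #(σ.support ∪ τ.support) := card_le_card (support_mul_le σ τ)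
    rw [List.sum_cons] at hcard
    have hσcard : #σ.support = ℓ - 1 + 1 := by omega
    have hτcard : #τ.support = l.sum := by omega
    have hdisj : Disjoint σ τ := by
      rw [disjoint_iff_disjoint_support, ← card_union_eq_card_add_card]
      omega
    rw [hdisj.cycleType_mul, (isCycle_of_mem_starProds (by omega) hσ hσcard).cycleType,
      hσcard, cycleType_of_mem_starWords hl' hτ hτcard, Nat.sub_add_cancel (by omega)]
    simp

theorem exists_conj_mem_range_ofSubtype {p : α → Prop} [DecidablePred p] {σ τ : Perm α}
    (hσ : σ ∈ (ofSubtype (p := p)).range) (hτ : τ ∈ (ofSubtype (p := p)).range)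
    (h : σ.cycleType = τ.cycleType) : ∃ g ∈ (ofSubtype (p := p)).range, g * σ * g⁻¹ = τ := by
  obtain ⟨σ, rfl⟩ := hσ
  obtain ⟨τ, rfl⟩ := hτ
  rw [cycleType_ofSubtype, cycleType_ofSubtype, ← isConj_iff_cycleType_eq, isConj_iff] at h
  obtain ⟨c, rfl⟩ := h
  exact ⟨ofSubtype c, ⟨c, rfl⟩, by simp⟩

end DecidableEq

section LinearOrder

variable {α : Type*} [Fintype α] [LinearOrder α]

theorem two_le_of_mem_map_cycleFactors {ρ : Perm α} {ℓ : ℕ}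
    (hℓ : ℓ ∈ ρ.cycleFactors.1.map fun c => #c.support) : 2 ≤ ℓ := by
  obtain ⟨c, hc, rfl⟩ := List.mem_map.1 hℓ
  exact (ρ.cycleFactors.2.2.1 c hc).two_le_card_support

theorem cycleType_eq_map_cycleFactors (ρ : Perm α) :
    ρ.cycleType = (ρ.cycleFactors.1.map fun c => #c.support : List ℕ) :=
  cycleType_eq _ ρ.cycleFactors.2.1 ρ.cycleFactors.2.2.1 ρ.cycleFactors.2.2.2

end LinearOrder

end Equiv.Perm

open Equiv.Perm MonoidAlgebra

section PermsBelow

variable {n i : ℕ}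

def permsBelow (n i : ℕ) : Subgroup (Perm (Fin n)) :=
  (ofSubtype (p := fun k : Fin n => (k : ℕ) < i)).range

theorem mem_permsBelow_iff {σ : Perm (Fin n)} :
    σ ∈ permsBelow n i ↔ ∀ k : Fin n, i ≤ (k : ℕ) → σ k = k := by
  rw [permsBelow, mem_range_ofSubtype_iff, Set.subset_def]
  simp only [mem_coe, mem_support, ne_eq, Set.mem_ofPred_eq]
  exact forall_congr' fun k => by rw [← not_lt]; exact not_imp_comm

theorem lt_of_mem_support_of_mem_permsBelow {ρ : Perm (Fin n)} (hρ : ρ ∈ permsBelow n i)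
    {x : Fin n} (hx : x ∈ ρ.support) : (x : ℕ) < i := by
  by_contra h
  exact mem_support.1 hx (mem_permsBelow_iff.1 hρ x (not_lt.1 h))

theorem apply_lt_of_mem_permsBelow {σ : Perm (Fin n)} (hσ : σ ∈ permsBelow n i) {k : Fin n}
    (hk : (k : ℕ) < i) : (σ k : ℕ) < i := by
  by_contra h
  have := σ.injective (mem_permsBelow_iff.1 hσ (σ k) (not_lt.1 h))
  rw [this] at h
  exact h hk

theorem swap_mem_permsBelow {a b : Fin n} (ha : (a : ℕ) < i) (hb : (b : ℕ) < i) :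
    swap a b ∈ permsBelow n i :=
  mem_permsBelow_iff.2 fun k hk =>
    swap_apply_of_ne_of_ne (by rintro rfl; omega) (by rintro rfl; omega)

def adjacentSwaps (n i : ℕ) : Set (Perm (Fin n)) :=
  {σ | ∃ a b : Fin n, (a : ℕ) + 1 = b ∧ (b : ℕ) < i ∧ σ = swap a b}

theorem swap_mem_closure_adjacentSwaps {a b : Fin n} (hab : a < b) (hb : (b : ℕ) < i) :
    swap a b ∈ Subgroup.closure (adjacentSwaps n i) := by
  obtain ⟨b, hbn⟩ := b
  induction b with
  | zero => simp [Fin.lt_def] at hab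
  | succ b ih =>
    have hadj : swap ⟨b, by omega⟩ ⟨b + 1, hbn⟩ ∈ Subgroup.closure (adjacentSwaps n i) :=
      Subgroup.subset_closure ⟨_, _, rfl, hb, rfl⟩
    rcases Nat.lt_succ_iff_lt_or_eq.1 (Fin.lt_def.1 hab) with h | h
    · have hb' : b + 1 < i := hb
      exact SubmonoidClass.swap_mem_trans _ (ih (by omega) (Fin.lt_def.2 h) (by simp; omega)) hadj
    · convert hadj

theorem permsBelow_le_closure_adjacentSwaps :
    permsBelow n i ≤ Subgroup.closure (adjacentSwaps n i) := by
  intro σ hσ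
  rw [mem_closure_isSwap fun f hf => by
    obtain ⟨a, b, hab, -, rfl⟩ := hf
    exact ⟨a, b, by rintro rfl; omega, rfl⟩]
  refine ⟨Set.toFinite _, fun x => ?_⟩
  by_cases hx : σ x = x
  · rw [hx]
    exact MulAction.mem_orbit_self x
  have hxi : (x : ℕ) < i := lt_of_mem_support_of_mem_permsBelow hσ (mem_support.2 hx)
  have hσx := apply_lt_of_mem_permsBelow hσ hxi
  have hswap : swap x (σ x) ∈ Subgroup.closure (adjacentSwaps n i) := by
    rcases lt_or_gt_of_ne (Ne.symm hx) with h | h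
    · exact swap_mem_closure_adjacentSwaps h hσx
    · exact swap_comm x (σ x) ▸ swap_mem_closure_adjacentSwaps h hxi
  exact ⟨⟨_, hswap⟩, swap_apply_left x (σ x)⟩

noncomputable abbrev groupAlgBelow (n i : ℕ) : Subalgebra ℂ (MonoidAlgebra ℂ (Perm (Fin n))) :=
  supportedSubalgebra ℂ (permsBelow n i).toSubmonoid

theorem groupAlgCopy_eq_toSubmodule : groupAlgCopy n i = (groupAlgBelow n i).toSubmodule := by
  change _ = supported ℂ ℂ (permsBelow n i : Set (Perm (Fin n)))
  rw [groupAlgCopy, supported_eq_span_single]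
  congr 1
  ext x
  simp [mem_permsBelow_iff, of_apply, eq_comm]

theorem mem_centerCopy_iff {x : MonoidAlgebra ℂ (Perm (Fin n))} :
    x ∈ centerCopy n i ↔
      x ∈ groupAlgBelow n i ∧ ∀ g ∈ permsBelow n i, Commute (of ℂ _ g) x := by
  simp only [centerCopy, groupAlgCopy_eq_toSubmodule, Subalgebra.mem_toSubmodule,
    Set.mem_ofPred_eq]
  refine and_congr_right fun _ => ⟨fun h g hg => (h _ (of_mem_supportedSubalgebra hg)).symm,
    fun h y hy => (commute_of_mem_supported h hy).symm.eq⟩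

theorem mem_permsBelow_of_coeff_ne_zero {x : MonoidAlgebra ℂ (Perm (Fin n))}
    (hx : x ∈ centerCopy n i) {τ : Perm (Fin n)} (hτ : x.coeff τ ≠ 0) : τ ∈ permsBelow n i :=
  mem_supported.1 (mem_centerCopy_iff.1 hx).1 (Finsupp.mem_support_iff.2 hτ)

theorem sub_smul_mem_centerCopy {x y : MonoidAlgebra ℂ (Perm (Fin n))}
    (hx : x ∈ centerCopy n i) (hy : y ∈ centerCopy n i) (c : ℂ) : x - c • y ∈ centerCopy n i := by
  rw [mem_centerCopy_iff] at hx hy ⊢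
  exact ⟨sub_mem hx.1 (Subalgebra.smul_mem _ hy.1 c),
    fun g hg => (hx.2 g hg).sub_right ((hy.2 g hg).smul_right c)⟩

theorem coeff_eq_of_cycleType_eq {x : MonoidAlgebra ℂ (Perm (Fin n))} (hx : x ∈ centerCopy n i)
    {ρ τ : Perm (Fin n)} (hρ : ρ ∈ permsBelow n i) (hτ : τ ∈ permsBelow n i)
    (h : ρ.cycleType = τ.cycleType) : x.coeff τ = x.coeff ρ := by
  obtain ⟨g, hg, rfl⟩ := exists_conj_mem_range_ofSubtype hρ hτ h
  exact coeff_conj_of_commute ((mem_centerCopy_iff.1 hx).2 g hg) ρ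

end PermsBelow

section JucysMurphy

variable {n i : ℕ}

local notation "ofS" => MonoidAlgebra.of ℂ (Perm (Fin n))

theorem jm_mem_groupAlgBelow {k : Fin n} (hk : (k : ℕ) < i) : jm n k ∈ groupAlgBelow n i :=
  Subalgebra.sum_mem _ fun a ha =>
    of_mem_supportedSubalgebra (swap_mem_permsBelow (by simp at ha; omega) hk)

theorem commute_jm_of_apply_eq_of_lt_iff {g : Perm (Fin n)} {k : Fin n} (hgk : g k = k)
    (hg : ∀ a, g a < k ↔ a < k) : Commute (ofS g) (jm n k) := by
  have hconj : ∀ a, ofS g * ofS (swap a k) = ofS (swap (g a) k) * ofS g := fun a => by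
    rw [← map_mul, ← map_mul, ← hgk, swap_apply_apply, hgk, inv_mul_cancel_right]
  rw [Commute, SemiconjBy, jm, mul_sum, sum_mul, sum_congr rfl fun a _ => hconj a]
  exact sum_equiv g (fun a => by simp [hg]) (fun _ _ => rfl)

theorem commute_jm_of_mem_permsBelow {g : Perm (Fin n)} {k : Fin n}
    (hg : g ∈ permsBelow n k) : Commute (ofS g) (jm n k) := by
  refine commute_jm_of_apply_eq_of_lt_iff (mem_permsBelow_iff.1 hg k le_rfl) fun a =>
    ⟨fun h => ?_, fun h => apply_lt_of_mem_permsBelow hg h⟩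
  by_contra ha
  rw [mem_permsBelow_iff.1 hg a (not_lt.1 ha)] at h
  exact ha h

theorem jm_commute (j k : Fin n) : Commute (jm n j) (jm n k) := by
  have key : ∀ j k : Fin n, j < k → Commute (jm n j) (jm n k) := fun j k h =>
    commute_of_mem_supported (fun _ hg => commute_jm_of_mem_permsBelow hg)
      (jm_mem_groupAlgBelow h)
  rcases lt_trichotomy j k with h | rfl | h
  · exact key j k h
  · exact Commute.refl _
  · exact (key k j h).symm

theorem commute_swap_jm {a b m : Fin n} (hab : (a : ℕ) + 1 = b) (hma : m ≠ a) (hmb : m ≠ b) :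
    Commute (ofS (swap a b)) (jm n m) := by
  refine commute_jm_of_apply_eq_of_lt_iff (swap_apply_of_ne_of_ne hma hmb) fun x => ?_
  have hma' : (m : ℕ) ≠ a := fun h => hma (Fin.ext h)
  have hmb' : (m : ℕ) ≠ b := fun h => hmb (Fin.ext h)
  rcases eq_or_ne x a with rfl | hxa
  · rw [swap_apply_left, Fin.lt_def, Fin.lt_def]
    omega
  rcases eq_or_ne x b with rfl | hxb
  · rw [swap_apply_right, Fin.lt_def, Fin.lt_def]
    omega
  · rw [swap_apply_of_ne_of_ne hxa hxb]

theorem swap_mul_jm_mul_swap {a b : Fin n} (hab : (a : ℕ) + 1 = b) :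
    ofS (swap a b) * jm n a * ofS (swap a b) = jm n b - ofS (swap a b) := by
  have hconj : ∀ c < a, swap a b * swap c a * swap a b = swap c b := fun c hc => by
    have hcb : c ≠ b := by rintro rfl; rw [Fin.lt_def] at hc; omega
    have := swap_apply_apply (swap a b) c a
    rwa [swap_inv, swap_apply_left, swap_apply_of_ne_of_ne hc.ne hcb, eq_comm] at this
  have hfilter : univ.filter (· < b) = insert a (univ.filter (· < a)) := by
    ext c
    simp only [mem_filter, mem_univ, true_and, mem_insert, Fin.lt_def, Fin.ext_iff]
    omega
  rw [jm, mul_sum, sum_mul, jm, hfilter, sum_insert (by simp), add_sub_cancel_left]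
  exact sum_congr rfl fun c hc => by
    rw [← map_mul, ← map_mul, hconj c (mem_filter.1 hc).2]

noncomputable def jmPowerSum (n i e : ℕ) : MonoidAlgebra ℂ (Perm (Fin n)) :=
  ∑ k ∈ univ.filter (fun k : Fin n => (k : ℕ) < i), jm n k ^ e

theorem commute_jmPowerSum {g : Perm (Fin n)} (hg : g ∈ permsBelow n i) (e : ℕ) :
    Commute (ofS g) (jmPowerSum n i e) := by
  refine commute_of_mem_closure (fun s hs => ?_) (permsBelow_le_closure_adjacentSwaps hg)
  obtain ⟨a, b, hab, hbi, rfl⟩ := hs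
  have hconj := swap_mul_jm_mul_swap (n := n) hab
  set s := ofS (swap a b)
  have hss : s * s = 1 := by rw [← map_mul, swap_mul_self, map_one]
  have hx : s * jm n a = jm n b * s - 1 := by
    calc s * jm n a = s * jm n a * s * s := by rw [mul_assoc _ s, hss, mul_one]
      _ = jm n b * s - 1 := by rw [hconj, sub_mul, hss]
  have hy : s * jm n b = jm n a * s + 1 := by
    rw [← sub_add_cancel (jm n b) s, ← hconj, mul_add, ← mul_assoc, ← mul_assoc, hss, one_mul]
  have ha : a ∈ univ.filter (fun k : Fin n => (k : ℕ) < i) := by simp; omega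
  have hb : b ∈ (univ.filter (fun k : Fin n => (k : ℕ) < i)).erase a := by
    simp only [mem_erase, mem_filter, mem_univ, true_and]
    exact ⟨by rintro rfl; omega, hbi⟩
  rw [jmPowerSum, ← add_sum_erase _ _ ha, ← add_sum_erase _ _ hb, ← add_assoc]
  refine (commute_pow_add_pow_of_hecke hx hy (jm_commute a b) e).add_right
    (Commute.sum_right _ _ _ fun m hm => (commute_swap_jm hab ?_ ?_).pow_right e)
  · exact (mem_erase.1 (mem_erase.1 hm).2).1
  · exact (mem_erase.1 hm).1

theorem jmPowerSum_mem_centerCopy (i e : ℕ) : jmPowerSum n i e ∈ centerCopy n i :=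
  mem_centerCopy_iff.2
    ⟨Subalgebra.sum_mem _ fun _ hk => pow_mem (jm_mem_groupAlgBelow (mem_filter.1 hk).2) e,
      fun _ hg => commute_jmPowerSum hg e⟩

theorem jmPowerSum_mem_adjoin (i e : ℕ) :
    jmPowerSum n i e ∈ Algebra.adjoin ℂ (Set.range (jm n)) :=
  Subalgebra.sum_mem _ fun k _ => pow_mem (Algebra.subset_adjoin (Set.mem_range_self k)) e

theorem jm_eq_jmPowerSum_sub (k : Fin n) :
    jm n k = jmPowerSum n (k + 1) 1 - jmPowerSum n k 1 := by
  have hfilter : univ.filter (fun j : Fin n => (j : ℕ) < k + 1) =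
      insert k (univ.filter (fun j : Fin n => (j : ℕ) < k)) := by
    ext j
    simp only [mem_filter, mem_univ, true_and, mem_insert, Fin.ext_iff]
    omega
  rw [jmPowerSum, jmPowerSum, hfilter, sum_insert (by simp), pow_one, add_sub_cancel_right]

theorem jm_pow_mem_supported (k : Fin n) (m : ℕ) :
    jm n k ^ m ∈ supported ℂ ℂ (starProds k m) := by
  induction m with
  | zero => exact one_mem_supported ⟨[], rfl, rfl⟩
  | succ m ih =>
    have hjm : jm n k ∈ supported ℂ ℂ (starProds k 1) :=
      Submodule.sum_mem _ fun a _ => of_mem_supported ⟨[a], rfl, by simp⟩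
    rw [pow_succ']
    exact supported_mono (starProds_one_mul_subset k m) (mul_mem_supported hjm ih)

theorem prod_map_jmPowerSum_mem_supported :
    ∀ l : List ℕ, (l.map fun ℓ => jmPowerSum n i (ℓ - 1)).prod ∈ supported ℂ ℂ (starWords l)
  | [] => one_mem_supported rfl
  | ℓ :: l => mul_mem_supported
      (Submodule.sum_mem _ fun k _ =>
        supported_mono (Set.subset_iUnion (starProds · (ℓ - 1)) k) (jm_pow_mem_supported k _))
      (prod_map_jmPowerSum_mem_supported l)

end JucysMurphy

section CyclePowerProducts

open scoped ComplexOrder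

variable {n i : ℕ}

noncomputable def jmCyclePowerProd (n i : ℕ) (ρ : Perm (Fin n)) :
    MonoidAlgebra ℂ (Perm (Fin n)) :=
  ((ρ.cycleFactors.1.map fun c => #c.support).map fun ℓ => jmPowerSum n i (ℓ - 1)).prod

theorem jmCyclePowerProd_mem_centerCopy (ρ : Perm (Fin n)) :
    jmCyclePowerProd n i ρ ∈ centerCopy n i := by
  have hP := fun e => mem_centerCopy_iff.1 (jmPowerSum_mem_centerCopy (n := n) i e)
  refine mem_centerCopy_iff.2 ⟨Subalgebra.list_prod_mem _ fun x hx => ?_,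
    fun g hg => Commute.list_prod_right _ _ fun x hx => ?_⟩ <;>
  obtain ⟨ℓ, -, rfl⟩ := List.mem_map.1 hx
  · exact (hP _).1
  · exact (hP _).2 g hg

theorem jmCyclePowerProd_mem_adjoin (ρ : Perm (Fin n)) :
    jmCyclePowerProd n i ρ ∈ Algebra.adjoin ℂ (Set.range (jm n)) :=
  Subalgebra.list_prod_mem _ fun x hx => by
    obtain ⟨ℓ, -, rfl⟩ := List.mem_map.1 hx
    exact jmPowerSum_mem_adjoin i _

theorem mem_starWords_of_coeff_jmCyclePowerProd_ne_zero {ρ τ : Perm (Fin n)}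
    (hτ : (jmCyclePowerProd n i ρ).coeff τ ≠ 0) :
    τ ∈ starWords (ρ.cycleFactors.1.map fun c => #c.support) :=
  mem_supported.1 (prod_map_jmPowerSum_mem_supported _) (Finsupp.mem_support_iff.2 hτ)

theorem card_support_le_of_coeff_jmCyclePowerProd_ne_zero {ρ τ : Perm (Fin n)}
    (hτ : (jmCyclePowerProd n i ρ).coeff τ ≠ 0) : #τ.support ≤ #ρ.support := by
  have := card_support_le_of_mem_starWords
    (fun ℓ hℓ => (two_le_of_mem_map_cycleFactors hℓ).trans' one_le_two)
    (mem_starWords_of_coeff_jmCyclePowerProd_ne_zero hτ)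
  rwa [← Multiset.sum_coe, ← cycleType_eq_map_cycleFactors, sum_cycleType] at this

theorem cycleType_eq_of_coeff_jmCyclePowerProd_ne_zero {ρ τ : Perm (Fin n)}
    (hτ : (jmCyclePowerProd n i ρ).coeff τ ≠ 0) (hcard : #τ.support = #ρ.support) :
    τ.cycleType = ρ.cycleType := by
  rw [cycleType_eq_map_cycleFactors ρ]
  refine cycleType_of_mem_starWords (fun ℓ hℓ => two_le_of_mem_map_cycleFactors hℓ)
    (mem_starWords_of_coeff_jmCyclePowerProd_ne_zero hτ) ?_
  rw [← Multiset.sum_coe, ← cycleType_eq_map_cycleFactors, sum_cycleType, hcard]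

theorem jm_mem_nonnegCoeffs (k : Fin n) : jm n k ∈ nonnegCoeffs ℂ (Perm (Fin n)) :=
  Subsemiring.sum_mem _ fun _ _ => of_mem_nonnegCoeffs _

theorem jmPowerSum_mem_nonnegCoeffs (i e : ℕ) :
    jmPowerSum n i e ∈ nonnegCoeffs ℂ (Perm (Fin n)) :=
  Subsemiring.sum_mem _ fun k _ => pow_mem (jm_mem_nonnegCoeffs k) e

theorem coeff_jm_swap_pos {a k : Fin n} (h : a < k) : 0 < (jm n k).coeff (swap a k) := by
  rw [jm, ← add_sum_erase _ _ (mem_filter.2 ⟨mem_univ a, h⟩)]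
  exact coeff_add_pos (Subsemiring.sum_mem _ fun _ _ => of_mem_nonnegCoeffs _)
    (coeff_of_self_pos _)

theorem coeff_jmPowerSum_prod_map_swap_pos {k : Fin n} (hk : (k : ℕ) < i) {as : List (Fin n)}
    (has : ∀ a ∈ as, a < k) :
    0 < (jmPowerSum n i as.length).coeff ((as.map (swap · k)).prod) := by
  have hpow : 0 < (jm n k ^ as.length).coeff ((as.map (swap · k)).prod) := by
    rw [← List.prod_replicate, ← List.map_const']
    exact coeff_prod_map_pos _ _ as fun a ha =>
      ⟨jm_mem_nonnegCoeffs k, coeff_jm_swap_pos (has a ha)⟩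
  rw [jmPowerSum, ← add_sum_erase _ _ (mem_filter.2 ⟨mem_univ k, hk⟩)]
  exact coeff_add_pos (Subsemiring.sum_mem _ fun j _ => pow_mem (jm_mem_nonnegCoeffs j) _) hpow

theorem coeff_jmCyclePowerProd_self_pos {ρ : Perm (Fin n)} (hρ : ρ ∈ permsBelow n i) :
    0 < (jmCyclePowerProd n i ρ).coeff ρ := by
  obtain ⟨hprod, hcycle, hdisj⟩ := ρ.cycleFactors.2
  have key := coeff_prod_map_pos (fun c => jmPowerSum n i (#c.support - 1)) id ρ.cycleFactors.1
  rw [List.map_id, hprod] at key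
  rw [jmCyclePowerProd, List.map_map]
  refine key fun c hc => ⟨jmPowerSum_mem_nonnegCoeffs i _, ?_⟩
  -- Anchor the cycle at its largest point `k`, so that all its transpositions occur in `J_k`.
  have hne : c.support.Nonempty := card_pos.1 (by have := (hcycle c hc).two_le_card_support; omega)
  obtain ⟨as, hlen, has, hcas⟩ := (hcycle c hc).exists_prod_map_swap (c.support.max'_mem hne)
  rw [id, ← hlen, Nat.add_sub_cancel, ← hcas]
  refine coeff_jmPowerSum_prod_map_swap_pos ?_ fun a ha => ?_
  · have hsupp : c.support ⊆ ρ.support := hprod ▸ support_le_prod_of_mem hc hdisj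
    exact lt_of_mem_support_of_mem_permsBelow hρ (hsupp (c.support.max'_mem hne))
  · exact lt_of_le_of_ne (le_max' _ a (has a ha).1) (has a ha).2

end CyclePowerProducts

section GelfandZetlin

open scoped ComplexOrder

variable {n i : ℕ}

theorem coeff_ne_zero_of_coeff_sub_smul_ne_zero {x : MonoidAlgebra ℂ (Perm (Fin n))}
    (hx : x ∈ centerCopy n i) {ρ τ : Perm (Fin n)} (hρ : x.coeff ρ ≠ 0)
    (hcard : #τ.support = #ρ.support) {c : ℂ}
    (h : (x - c • jmCyclePowerProd n i ρ).coeff τ ≠ 0) : x.coeff τ ≠ 0 := by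
  by_cases hT : (jmCyclePowerProd n i ρ).coeff τ = 0
  · simpa [hT] using h
  rw [coeff_eq_of_cycleType_eq hx (mem_permsBelow_of_coeff_ne_zero hx hρ)
    (mem_permsBelow_of_coeff_ne_zero (jmCyclePowerProd_mem_centerCopy ρ) hT)
    (cycleType_eq_of_coeff_jmCyclePowerProd_ne_zero hT hcard).symm]
  exact hρ

theorem mem_adjoin_jm_of_card_support_le {s : ℕ}
    (ih : ∀ y ∈ centerCopy n i, (∀ τ ∈ y.coeff.support, #τ.support < s) →
      y ∈ Algebra.adjoin ℂ (Set.range (jm n)))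
    {x : MonoidAlgebra ℂ (Perm (Fin n))} (hx : x ∈ centerCopy n i)
    (hs : ∀ τ ∈ x.coeff.support, #τ.support ≤ s) : x ∈ Algebra.adjoin ℂ (Set.range (jm n)) := by
  induction hN : #(x.coeff.support.filter (#·.support = s)) using Nat.strong_induction_on
    generalizing x with
  | _ N IH =>
  obtain hempty | ⟨ρ, hρ⟩ := (x.coeff.support.filter (#·.support = s)).eq_empty_or_nonempty
  · refine ih x hx fun τ hτ => (hs τ hτ).lt_of_ne fun h => ?_
    exact eq_empty_iff_forall_notMem.1 hempty τ (mem_filter.2 ⟨hτ, h⟩)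
  obtain ⟨hρx, rfl⟩ := mem_filter.1 hρ
  rw [Finsupp.mem_support_iff] at hρx
  set T := jmCyclePowerProd n i ρ
  set c := x.coeff ρ / T.coeff ρ
  have hT : T.coeff ρ ≠ 0 :=
    (coeff_jmCyclePowerProd_self_pos (mem_permsBelow_of_coeff_ne_zero hx hρx)).ne'
  have hy := sub_smul_mem_centerCopy hx (jmCyclePowerProd_mem_centerCopy ρ) c
  have hys : ∀ τ ∈ (x - c • T).coeff.support, #τ.support ≤ #ρ.support := fun τ hτ => by
    by_cases hTτ : T.coeff τ = 0
    · exact hs τ (by simpa [hTτ] using hτ)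
    · exact card_support_le_of_coeff_jmCyclePowerProd_ne_zero hTτ
  have htop : (x - c • T).coeff.support.filter (#·.support = #ρ.support) ⊂
      x.coeff.support.filter (#·.support = #ρ.support) := by
    refine Finset.ssubset_of_subset_of_ssubset (fun τ hτ => ?_) (erase_ssubset hρ)
    obtain ⟨hτy, hτs⟩ := mem_filter.1 hτ
    rw [Finsupp.mem_support_iff] at hτy
    refine mem_erase.2 ⟨?_, mem_filter.2 ⟨Finsupp.mem_support_iff.2
      (coeff_ne_zero_of_coeff_sub_smul_ne_zero hx hρx hτs hτy), hτs⟩⟩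
    rintro rfl
    exact hτy (by simp [c, T, hT])
  rw [← sub_add_cancel x (c • T)]
  exact add_mem (IH _ (hN ▸ card_lt_card htop) hy hys rfl)
    (Subalgebra.smul_mem _ (jmCyclePowerProd_mem_adjoin ρ) c)

theorem centerCopy_subset_adjoin_jm (i : ℕ) :
    centerCopy n i ⊆ Algebra.adjoin ℂ (Set.range (jm n)) := by
  suffices ∀ s, ∀ x ∈ centerCopy n i, (∀ τ ∈ x.coeff.support, #τ.support < s) →
      x ∈ Algebra.adjoin ℂ (Set.range (jm n)) from
    fun x hx => this (n + 1) x hx fun τ _ =>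
      Nat.lt_succ_of_le (by simpa using card_le_univ τ.support)
  intro s
  induction s with
  | zero =>
    intro x _ hx
    obtain rfl : x = 0 := coeff_injective <| Finsupp.support_eq_empty.1 <|
      eq_empty_of_forall_notMem fun τ hτ => absurd (hx τ hτ) (Nat.not_lt_zero _)
    exact zero_mem _
  | succ s ih =>
    exact fun x hx hs => mem_adjoin_jm_of_card_support_le ih hx fun τ hτ =>
      Nat.lt_succ_iff.1 (hs τ hτ)

theorem jmPowerSum_mem_adjoin_centerCopy (hi : i ≤ n) (e : ℕ) :
    jmPowerSum n i e ∈ Algebra.adjoin ℂ (⋃ i ∈ Set.Icc 1 n, centerCopy n i) := by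
  rcases Nat.eq_zero_or_pos i with rfl | hi₀
  · simp [jmPowerSum]
  · exact Algebra.subset_adjoin (Set.mem_biUnion ⟨hi₀, hi⟩ (jmPowerSum_mem_centerCopy i e))

end GelfandZetlin

theorem gelfandZetlin_eq_adjoin_jm_general (n : ℕ) :
    Algebra.adjoin ℂ (⋃ i ∈ Set.Icc 1 n, centerCopy n i) =
      Algebra.adjoin ℂ (Set.range (jm n)) := by
  refine le_antisymm (Algebra.adjoin_le ?_) (Algebra.adjoin_le ?_)
  · exact Set.iUnion₂_subset fun i _ => centerCopy_subset_adjoin_jm i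
  · rintro _ ⟨k, rfl⟩
    rw [jm_eq_jmPowerSum_sub]
    exact sub_mem (jmPowerSum_mem_adjoin_centerCopy k.isLt 1)
      (jmPowerSum_mem_adjoin_centerCopy k.isLt.le 1)

/-- Okounkov–Vershik: the Gelfand–Zetlin algebra, i.e. the subalgebra generated by
`Z_1 ∪ ⋯ ∪ Z_n`, equals the subalgebra generated by the Jucys–Murphy elements
`J_1, …, J_n`. -/
theorem gelfandZetlin_eq_adjoin_jm (n : ℕ) (hn : 1 ≤ n) :
    Algebra.adjoin ℂ (⋃ i ∈ Set.Icc 1 n, centerCopy n i) =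
      Algebra.adjoin ℂ (Set.range (jm n)) :=
  gelfandZetlin_eq_adjoin_jm_general n
end
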